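/- There exists a quantum channel Φ on two qubits achieving ⟨vv*, (Φ⊗id)(uu*)⟩ = cos²(π/8), where u = (|00⟩+|11⟩)/√2 and v = cos(π/8)|00⟩ + sin(π/8)|11⟩; i.e., the bound cos²(π/8) is attained. -/

import Mathlib

open Matrix
open scoped Kronecker ComplexOrder

noncomputable section

/-- `Φ ⊗ id` : apply a linear map `Φ` on `L(X)` to the first tensor factor of `L(X ⊗ Z)`. -/
def lmapTensorId {n m k : Type*} [Fintype n] [Fintype k]
    (Φ : Matrix n n ℂ →ₗ[ℂ] Matrix m m ℂ)
    (M : Matrix (n × k) (n × k) ℂ) : Matrix (m × k) (m × k) ℂ :=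
  fun p q => Φ (fun i j => M (i, p.2) (j, q.2)) p.1 q.1

/-- `id ⊗ Ψ` : apply a linear map `Ψ` on `L(Z)` to the second tensor factor of `L(Y ⊗ Z)`. -/
def idTensorLmap {n k l : Type*} [Fintype n] [Fintype k]
    (Ψ : Matrix k k ℂ →ₗ[ℂ] Matrix l l ℂ)
    (M : Matrix (n × k) (n × k) ℂ) : Matrix (n × l) (n × l) ℂ :=
  fun p q => Ψ (fun a b => M (p.1, a) (q.1, b)) p.2 q.2

/-- Complete positivity: `Φ ⊗ id_k` maps positive semidefinite operators to positive
semidefinite operators for every finite-dimensional ancilla `k`. -/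
def IsCompletelyPositive {n m : Type*} [Fintype n] [Fintype m]
    (Φ : Matrix n n ℂ →ₗ[ℂ] Matrix m m ℂ) : Prop :=
  ∀ (k : Type) [Fintype k] [DecidableEq k],
    ∀ M : Matrix (n × k) (n × k) ℂ, M.PosSemidef → (lmapTensorId Φ M).PosSemidef

def IsTracePreserving {n m : Type*} [Fintype n] [Fintype m]
    (Φ : Matrix n n ℂ →ₗ[ℂ] Matrix m m ℂ) : Prop :=
  ∀ M : Matrix n n ℂ, (Φ M).trace = M.trace

/-- Partial trace over the first tensor factor. -/
def trFst {n k : Type*} [Fintype n] (M : Matrix (n × k) (n × k) ℂ) : Matrix k k ℂ :=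
  fun a b => ∑ i : n, M (i, a) (i, b)

/-- Partial trace over the second tensor factor. -/
def trSnd {n k : Type*} [Fintype k] (M : Matrix (n × k) (n × k) ℂ) : Matrix n n ℂ :=
  fun i j => ∑ a : k, M (i, a) (j, a)

/-- Hilbert-Schmidt inner product `⟨A, B⟩ = Tr(A* B)`. -/
def minner {n : Type*} [Fintype n] (A B : Matrix n n ℂ) : ℂ := (Aᴴ * B).trace

/-- `Matrix.PosSemidef.sqrt` as defined in the older Mathlib (removed since). -/
def posSemidefSqrt {n : Type*} [Fintype n] [DecidableEq n] {M : Matrix n n ℂ}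
    (hA : M.PosSemidef) : Matrix n n ℂ :=
  hA.1.eigenvectorUnitary.1 * diagonal ((↑) ∘ (√·) ∘ hA.1.eigenvalues) *
    (star hA.1.eigenvectorUnitary : Matrix n n ℂ)

open Classical in
/-- Square root of a positive semidefinite matrix (junk value `0` otherwise). -/
def msqrt {n : Type*} [Fintype n] [DecidableEq n] (M : Matrix n n ℂ) : Matrix n n ℂ :=
  if h : M.PosSemidef then posSemidefSqrt h else 0

/-- Trace norm `‖M‖₁ = Tr √(M* M)`. -/
def traceNorm {n : Type*} [Fintype n] [DecidableEq n] (M : Matrix n n ℂ) : ℝ :=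
  ((posSemidefSqrt (Matrix.posSemidef_conjTranspose_mul_self M)).trace).re

/-- Fidelity `F(Q, R) = ‖√Q √R‖₁` of positive semidefinite matrices. -/
def fid {n : Type*} [Fintype n] [DecidableEq n] (Q R : Matrix n n ℂ) : ℝ :=
  traceNorm (msqrt Q * msqrt R)

/-- Choi-Jamiolkowski operator `J(Φ) = Σ_{i,j} Φ(|i⟩⟨j|) ⊗ |i⟩⟨j|`. -/
def choi {n m : Type*} [Fintype n] [DecidableEq n] [Fintype m]
    (Φ : Matrix n n ℂ →ₗ[ℂ] Matrix m m ℂ) : Matrix (m × n) (m × n) ℂ :=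
  fun p q => Φ (Matrix.single p.2 q.2 1) p.1 q.1

/-- Tensor product of vectors. -/
def tensorVec {α β : Type*} (v : α → ℂ) (w : β → ℂ) : α × β → ℂ := fun p => v p.1 * w p.2

/-- `u = (|00⟩ + |11⟩)/√2`. -/
def uVec : Fin 2 × Fin 2 → ℂ := fun p =>
  if p = (0, 0) then (Real.sqrt 2 : ℂ)⁻¹ else if p = (1, 1) then (Real.sqrt 2 : ℂ)⁻¹ else 0

/-- `v = cos(π/8)|00⟩ + sin(π/8)|11⟩`. -/
def vVec : Fin 2 × Fin 2 → ℂ := fun p =>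
  if p = (0, 0) then (Real.cos (Real.pi / 8) : ℂ)
  else if p = (1, 1) then (Real.sin (Real.pi / 8) : ℂ) else 0

/-- `w = -sin(π/8)|00⟩ + cos(π/8)|11⟩`. -/
def wVec : Fin 2 × Fin 2 → ℂ := fun p =>
  if p = (0, 0) then -(Real.sin (Real.pi / 8) : ℂ)
  else if p = (1, 1) then (Real.cos (Real.pi / 8) : ℂ) else 0


/-!
The identity channel attains the bound: `(id ⊗ id)(uu*) = uu*`, so the quantity is
`|⟨v, u⟩|² = ((cos θ + sin θ)/√2)² = (1 + sin 2θ)/2` with `θ = π/8`, and since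
`sin (π/4) = cos (π/4)` this equals `(1 + cos 2θ)/2 = cos² θ`.
-/

theorem lmapTensorId_id {n k : Type*} [Fintype n] [Fintype k] (M : Matrix (n × k) (n × k) ℂ) :
    lmapTensorId LinearMap.id M = M :=
  rfl

theorem isCompletelyPositive_id {n : Type*} [Fintype n] :
    IsCompletelyPositive (LinearMap.id : Matrix n n ℂ →ₗ[ℂ] Matrix n n ℂ) :=
  fun _ _ _ _ hM => hM

theorem isTracePreserving_id {n : Type*} [Fintype n] :
    IsTracePreserving (LinearMap.id : Matrix n n ℂ →ₗ[ℂ] Matrix n n ℂ) :=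
  fun _ => rfl

theorem minner_vecMulVec_star {n : Type*} [Fintype n] (v u : n → ℂ) :
    minner (vecMulVec v (star v)) (vecMulVec u (star u)) = Complex.normSq (star v ⬝ᵥ u) := by
  rw [minner, conjTranspose_vecMulVec, star_star, vecMulVec_mul_vecMulVec, trace_vecMulVec,
    dotProduct_smul, smul_eq_mul, dotProduct_star, dotProduct_comm u,
    ← Complex.mul_conj, Complex.star_def]

theorem star_vVec_dotProduct_uVec :
    star vVec ⬝ᵥ uVec = ((Real.cos (Real.pi / 8) + Real.sin (Real.pi / 8)) / √2 : ℝ) := by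
  simp only [dotProduct, Fintype.sum_prod_type, Fin.sum_univ_two, vVec, uVec, Pi.star_apply,
    RCLike.star_def, Complex.conj_ofReal, Prod.mk.injEq, mul_ite, mul_zero, and_true, and_false,
    zero_ne_one, one_ne_zero, ↓reduceIte, add_zero, zero_add, Complex.ofReal_div,
    Complex.ofReal_add]
  ring

theorem cos_add_sin_div_sqrt_two_sq (θ : ℝ) :
    ((Real.cos θ + Real.sin θ) / √2) ^ 2 = (1 + Real.sin (2 * θ)) / 2 := by
  rw [div_pow, Real.sq_sqrt zero_le_two, Real.sin_two_mul, ← Real.sin_sq_add_cos_sq θ]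
  ring

/-- There is a quantum channel on the first qubit attaining
`⟨vv*, (Φ ⊗ id)(uu*)⟩ = cos²(π/8)`. -/
theorem stmt1 :
    ∃ Φ : Matrix (Fin 2) (Fin 2) ℂ →ₗ[ℂ] Matrix (Fin 2) (Fin 2) ℂ,
      IsCompletelyPositive Φ ∧ IsTracePreserving Φ ∧
      minner (vecMulVec vVec (star vVec)) (lmapTensorId Φ (vecMulVec uVec (star uVec))) =
        ((Real.cos (Real.pi / 8) ^ 2 : ℝ) : ℂ) := by
  refine ⟨LinearMap.id, isCompletelyPositive_id, isTracePreserving_id, ?_⟩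
  rw [lmapTensorId_id, minner_vecMulVec_star, star_vVec_dotProduct_uVec, Complex.normSq_ofReal,
    ← sq, cos_add_sin_div_sqrt_two_sq, Real.cos_sq]
  have hθ : 2 * (Real.pi / 8) = Real.pi / 4 := by ring
  rw [hθ, Real.sin_pi_div_four, Real.cos_pi_div_four]
  push_cast
  ring

end
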